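/- Let λ be a partition of n displayed on an e-runner abacus with s beads at positions β_k = λ_k + s − k. Then λ contains an (e,i)-hook if and only if there is an occupied position b and a positive integer k such that position b − ke is unoccupied and exactly k(e−i) of the positions b−ke+1, …, b−1 are occupied. -/

import Mathlib

open scoped BigOperators

/-- A partition of `n`, with parts indexed from `1`. -/
structure Ptn (n : ℕ) where
  part : ℕ → ℕ
  antitone : ∀ ⦃a b : ℕ⦄, 1 ≤ a → a ≤ b → part b ≤ part a
  bounded : ∀ a : ℕ, n < a → part a = 0
  total : ∑ a ∈ Finset.Icc 1 n, part a = n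

namespace Ptn

/-- `(a,b)` is a node of the Young diagram of `lam`. -/
def cell {n : ℕ} (lam : Ptn n) (x : ℕ × ℕ) : Prop :=
  1 ≤ x.1 ∧ 1 ≤ x.2 ∧ x.2 ≤ lam.part x.1

/-- leg length of the node `x`. -/
noncomputable def legLen {n : ℕ} (lam : Ptn n) (x : ℕ × ℕ) : ℕ :=
  Set.ncard {a : ℕ | x.1 < a ∧ x.2 ≤ lam.part a}

/-- hook length of the node `x`. -/
noncomputable def hookLen {n : ℕ} (lam : Ptn n) (x : ℕ × ℕ) : ℕ :=
  (lam.part x.1 - x.2) + legLen lam x + 1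

/-- `x` is an `(e,i)`-hook of `lam`. -/
def IsHook (e i : ℕ) {n : ℕ} (lam : Ptn n) (x : ℕ × ℕ) : Prop :=
  cell lam x ∧ e ∣ hookLen lam x ∧ hookLen lam x * (e - i) = e * legLen lam x

def HasHook (e i : ℕ) {n : ℕ} (lam : Ptn n) : Prop := ∃ x : ℕ × ℕ, IsHook e i lam x

end Ptn

/-- `x` and `y` lie in the same `(e,i)`-ladder. -/
def SameLadder (e i : ℕ) (x y : ℕ × ℕ) : Prop :=
  (e - i) * x.2 + x.1 * i = (e - i) * y.2 + y.1 * i ∧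
  ((x.2 : ℤ) - (x.1 : ℤ)) ≡ ((y.2 : ℤ) - (y.1 : ℤ)) [ZMOD (e : ℤ)]

/-- `lam` and `mu` are in the same `(e,i)`-regularisation class. -/
def SameClass (e i : ℕ) {n : ℕ} (lam mu : Ptn n) : Prop :=
  ∀ x : ℕ × ℕ,
    Set.ncard {y : ℕ × ℕ | lam.cell y ∧ SameLadder e i x y}
      = Set.ncard {y : ℕ × ℕ | mu.cell y ∧ SameLadder e i x y}

/-- dominance order: `mu` dominates `lam`. -/
def Dominates {n : ℕ} (mu lam : Ptn n) : Prop :=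
  ∀ j : ℕ, ∑ k ∈ Finset.Icc 1 j, lam.part k ≤ ∑ k ∈ Finset.Icc 1 j, mu.part k

/-- `mu` is obtained from `lam` by moving some nodes strictly upwards in their
`(e,i)`-ladders. -/
def MovedUp (e i : ℕ) {n : ℕ} (lam mu : Ptn n) : Prop :=
  mu ≠ lam ∧ SameClass e i lam mu ∧
  ∃ f : ℕ × ℕ → ℕ × ℕ,
    Set.BijOn f {x : ℕ × ℕ | mu.cell x ∧ ¬ lam.cell x}
      {y : ℕ × ℕ | lam.cell y ∧ ¬ mu.cell y} ∧
    ∀ x : ℕ × ℕ, mu.cell x → ¬ lam.cell x →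
      SameLadder e i x (f x) ∧ x.1 < (f x).1

/-- position `t` is occupied in the `s`-bead abacus display of `lam`. -/
def Occupied {n : ℕ} (lam : Ptn n) (s t : ℕ) : Prop :=
  ∃ k : ℕ, 1 ≤ k ∧ k ≤ s ∧ t = lam.part k + s - k

/-!
Row `j` of `λ` carries the bead `β_j = λ_j + s - j`, and the beads decrease strictly down the rows.
For a node `(a, c)` let `m` be the length of column `c`. Then the position `d = c - 1 + s - m` is
empty, the beads above it are exactly those of rows `1, …, m`, and sliding the bead `β_a` down to
`d` corresponds to removing the rim hook of `(a, c)`: the hook length is `β_a - d` and the leg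
length `m - a` is the number of beads strictly between `d` and `β_a`. Conversely, an empty
position `d` below a bead `β_a` determines `m` as the number of beads above `d`, and
`c = d + 1 + m - s` recovers the node.
-/

lemma exists_iff_le_of_downClosed (P : ℕ → Prop) (s : ℕ)
    (hP : ∀ ⦃j k⦄, 1 ≤ j → j ≤ k → k ≤ s → P k → P j) :
    ∃ m ≤ s, ∀ j, 1 ≤ j → j ≤ s → (P j ↔ j ≤ m) := by
  classical
  refine ⟨Nat.findGreatest P s, Nat.findGreatest_le s, fun j hj hjs => ⟨?_, fun hjm => ?_⟩⟩
  · exact Nat.le_findGreatest hjs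
  · exact hP hj hjm (Nat.findGreatest_le s) (Nat.findGreatest_of_ne_zero rfl (by omega))

namespace Ptn

variable {n : ℕ} (lam : Ptn n)

def beta (s j : ℕ) : ℕ := lam.part j + s - j

lemma beta_lt_beta {s j k : ℕ} (hj : 1 ≤ j) (hjk : j < k) (hks : k ≤ s) :
    lam.beta s k < lam.beta s j := by
  have := lam.antitone hj hjk.le
  unfold beta
  omega

lemma beta_le_beta {s j k : ℕ} (hj : 1 ≤ j) (hjk : j ≤ k) (hks : k ≤ s) :
    lam.beta s k ≤ lam.beta s j := by
  rcases hjk.eq_or_lt with rfl | hjk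
  · rfl
  · exact (lam.beta_lt_beta hj hjk hks).le

lemma isHook_iff {e i : ℕ} {x : ℕ × ℕ} :
    IsHook e i lam x ↔
      lam.cell x ∧ ∃ k, 0 < k ∧ lam.hookLen x = k * e ∧ lam.legLen x = k * (e - i) := by
  have hpos : 0 < lam.hookLen x := Nat.succ_pos _
  refine and_congr_right fun _ => ⟨?_, ?_⟩
  · rintro ⟨⟨k, hk⟩, hleg⟩
    have he : 0 < e := Nat.pos_of_mul_pos_right (hk ▸ hpos)
    refine ⟨k, Nat.pos_of_mul_pos_left (hk ▸ hpos), by rw [hk, mul_comm], ?_⟩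
    apply Nat.eq_of_mul_eq_mul_left he
    rw [← hleg, hk]
    ring
  · rintro ⟨k, -, hH, hL⟩
    exact ⟨⟨k, by rw [hH, mul_comm]⟩, by rw [hH, hL]; ring⟩

lemma legLen_eq_of_column {a c m : ℕ} (hcol : ∀ j, 1 ≤ j → (c ≤ lam.part j ↔ j ≤ m)) :
    lam.legLen (a, c) = m - a := by
  have hset : {j | a < j ∧ c ≤ lam.part j} = ↑(Finset.Ioc a m) := by
    ext j
    simp only [Set.mem_ofPred_eq, Finset.coe_Ioc, Set.mem_Ioc]
    exact and_congr_right fun haj => hcol j (by omega)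
  rw [legLen, hset, Set.ncard_coe_finset, Nat.card_Ioc]

variable {lam}

lemma exists_colLen {s c : ℕ} (hs : ∀ k, s < k → lam.part k = 0) (hc : 1 ≤ c) :
    ∃ m ≤ s, ∀ j, 1 ≤ j → (c ≤ lam.part j ↔ j ≤ m) := by
  obtain ⟨m, hms, hm⟩ := exists_iff_le_of_downClosed (fun j => c ≤ lam.part j) s
    fun j k hj hjk _ hk => hk.trans (lam.antitone hj hjk)
  refine ⟨m, hms, fun j hj => ?_⟩
  by_cases hjs : j ≤ s
  · exact hm j hj hjs
  · rw [hs j (by omega)]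
    omega

variable (lam) in
lemma exists_beads_above (s d : ℕ) :
    ∃ m ≤ s, ∀ j, 1 ≤ j → j ≤ s → (d < lam.beta s j ↔ j ≤ m) :=
  exists_iff_le_of_downClosed _ s fun _ _ hj hjk hks hk => hk.trans_le (lam.beta_le_beta hj hjk hks)

variable {s a c d m : ℕ}

lemma gap_of_column (hcol : ∀ j, 1 ≤ j → (c ≤ lam.part j ↔ j ≤ m)) (hrel : d + m + 1 = c + s) :
    (∀ j, 1 ≤ j → j ≤ s → (d < lam.beta s j ↔ j ≤ m)) ∧ ¬ Occupied lam s d := by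
  have hsep : ∀ j, 1 ≤ j → j ≤ s → (j ≤ m → d < lam.beta s j) ∧ (m < j → lam.beta s j < d) := by
    intro j hj hjs
    have := hcol j hj
    unfold beta
    constructor <;> intro <;> omega
  refine ⟨fun j hj hjs => ⟨fun h => ?_, (hsep j hj hjs).1⟩, ?_⟩
  · by_contra hjm
    exact (hsep j hj hjs).2 (by omega) |>.not_gt h
  · rintro ⟨j, hj, hjs, rfl⟩
    rcases le_or_gt j m with hjm | hjm
    · exact ((hsep j hj hjs).1 hjm).false
    · exact ((hsep j hj hjs).2 hjm).false

lemma column_of_gap (hs : ∀ k, s < k → lam.part k = 0)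
    (habove : ∀ j, 1 ≤ j → j ≤ s → (d < lam.beta s j ↔ j ≤ m)) (hms : m ≤ s)
    (hgap : ¬ Occupied lam s d) :
    ∃ c, 1 ≤ c ∧ d + m + 1 = c + s ∧ ∀ j, 1 ≤ j → (c ≤ lam.part j ↔ j ≤ m) := by
  have hbelow : m < s → lam.beta s (m + 1) < d := fun hm =>
    lt_of_le_of_ne (not_lt.1 fun h => by have := (habove (m + 1) (by omega) hm).1 h; omega)
      fun h => hgap ⟨m + 1, by omega, hm, h.symm⟩
  simp only [beta] at hbelow
  refine ⟨d + m + 1 - s, by omega, by omega, fun j hj => ⟨fun hcj => ?_, fun hjm => ?_⟩⟩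
  · by_contra hjm
    by_cases hjs : j ≤ s
    · have := lam.antitone (show 1 ≤ m + 1 by omega) (show m + 1 ≤ j by omega)
      omega
    · rw [hs j (by omega)] at hcj
      omega
  · have hm := (habove m (by omega) hms).2 le_rfl
    have := lam.antitone hj hjm
    unfold beta at hm
    omega

lemma hookLen_add_eq_beta (hcol : ∀ j, 1 ≤ j → (c ≤ lam.part j ↔ j ≤ m))
    (hrel : d + m + 1 = c + s) (ha : 1 ≤ a) (ham : a ≤ m) :
    lam.hookLen (a, c) + d = lam.beta s a := by
  have := (hcol a ha).2 ham
  rw [hookLen, legLen_eq_of_column lam hcol, beta]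
  dsimp only
  omega

lemma ncard_occupied_between (habove : ∀ j, 1 ≤ j → j ≤ s → (d < lam.beta s j ↔ j ≤ m))
    (ha : 1 ≤ a) (ham : a ≤ m) (hms : m ≤ s) :
    Set.ncard {t | d < t ∧ t < lam.beta s a ∧ Occupied lam s t} = m - a := by
  have hinj : Set.InjOn (lam.beta s) (Set.Ioc a m) := fun x hx y hy hxy => by
    simp only [Set.mem_Ioc] at hx hy
    by_contra hne
    rcases Nat.lt_or_gt_of_ne hne with h | h
    · exact (lam.beta_lt_beta (by omega) h (by omega)).ne hxy.symm
    · exact (lam.beta_lt_beta (by omega) h (by omega)).ne hxy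
  have hset : {t | d < t ∧ t < lam.beta s a ∧ Occupied lam s t} = lam.beta s '' Set.Ioc a m := by
    ext t
    simp only [Set.mem_ofPred_eq, Set.mem_image, Set.mem_Ioc]
    constructor
    · rintro ⟨hdt, hta, j, hj, hjs, rfl⟩
      refine ⟨j, ⟨?_, (habove j hj hjs).1 hdt⟩, rfl⟩
      by_contra haj
      exact hta.not_ge (lam.beta_le_beta hj (by omega) (by omega))
    · rintro ⟨j, ⟨haj, hjm⟩, rfl⟩
      exact ⟨(habove j (by omega) (by omega)).2 hjm, lam.beta_lt_beta ha haj (by omega),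
        j, by omega, by omega, rfl⟩
  rw [hset, hinj.ncard_image, ← Finset.coe_Ioc, Set.ncard_coe_finset, Nat.card_Ioc]

end Ptn

open Ptn in
theorem stmt4_general (e i n s : ℕ)
    (lam : Ptn n) (hs : ∀ k : ℕ, s < k → lam.part k = 0) :
    Ptn.HasHook e i lam ↔
      ∃ b k : ℕ, 0 < k ∧ Occupied lam s b ∧ k * e ≤ b ∧
        ¬ Occupied lam s (b - k * e) ∧
        Set.ncard {t : ℕ | b - k * e < t ∧ t < b ∧ Occupied lam s t}
          = k * (e - i) := by
  constructor
  · rintro ⟨⟨a, c⟩, hhook⟩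
    obtain ⟨⟨ha, hc, hca⟩, k, hk, hH, hL⟩ := (isHook_iff lam).1 hhook
    dsimp only at ha hc hca
    obtain ⟨m, hms, hcol⟩ := exists_colLen hs hc
    have ham : a ≤ m := (hcol a ha).1 hca
    have hrel : (c + s - m - 1) + m + 1 = c + s := by omega
    obtain ⟨habove, hgap⟩ := gap_of_column hcol hrel
    have hbeta := hookLen_add_eq_beta hcol hrel ha ham
    have hd : lam.beta s a - k * e = c + s - m - 1 := by omega
    refine ⟨lam.beta s a, k, hk, ⟨a, ha, ham.trans hms, rfl⟩, by omega, hd ▸ hgap, ?_⟩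
    rw [hd, ncard_occupied_between habove ha ham hms, ← legLen_eq_of_column lam hcol, hL]
  · rintro ⟨b, k, hk, ⟨a, ha, has, hb⟩, hkb, hgap, hcount⟩
    change b = lam.beta s a at hb
    subst hb
    obtain ⟨m, hms, habove⟩ := exists_beads_above lam s (lam.beta s a - k * e)
    have hda : lam.beta s a - k * e < lam.beta s a := by
      have : lam.beta s a - k * e ≠ lam.beta s a := fun h => hgap ⟨a, ha, has, h⟩
      omega
    have ham : a ≤ m := (habove a ha has).1 hda
    obtain ⟨c, hc, hrel, hcol⟩ := column_of_gap hs habove hms hgap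
    have hH := hookLen_add_eq_beta hcol hrel ha ham
    rw [ncard_occupied_between habove ha ham hms] at hcount
    refine ⟨(a, c), (isHook_iff lam).2 ⟨⟨ha, hc, (hcol a ha).2 ham⟩, k, hk, by omega, ?_⟩⟩
    rw [legLen_eq_of_column lam hcol, hcount]

theorem stmt4 (e i n s : ℕ) (he : 2 ≤ e) (hi : 0 < i) (hie : i < e)
    (lam : Ptn n) (hs : ∀ k : ℕ, s < k → lam.part k = 0) :
    Ptn.HasHook e i lam ↔
      ∃ b k : ℕ, 0 < k ∧ Occupied lam s b ∧ k * e ≤ b ∧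
        ¬ Occupied lam s (b - k * e) ∧
        Set.ncard {t : ℕ | b - k * e < t ∧ t < b ∧ Occupied lam s t}
          = k * (e - i) :=
  stmt4_general e i n s lam hs
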